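/- arXiv:1808.09097 — 2 statements merged into one kernel-verified Lean document; each statement's English description precedes it below -/
import Mathlib

section
/- For the cylinder P_r □ C_s with r ≥ ⌊s/2⌋·s, both the isometric path cover number and the isometric path partition number equal s. -/
open SimpleGraph

/-- `s` is the vertex set of an isometric (shortest) path in `G`. -/
def IsIsoPathSet {V : Type*} (G : SimpleGraph V) (s : Set V) : Prop :=
  ∃ (u v : V) (p : G.Walk u v), p.IsPath ∧ p.length = G.dist u v ∧ s = {x | x ∈ p.support}

/-- The isometric path cover number. -/
noncomputable def ipCover {V : Type*} (G : SimpleGraph V) : ℕ :=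
  sInf {n | ∃ f : Fin n → Set V, (∀ i, IsIsoPathSet G (f i)) ∧ (⋃ i, f i) = Set.univ}

/-- The isometric path partition number. -/
noncomputable def ipPartition {V : Type*} (G : SimpleGraph V) : ℕ :=
  sInf {n | ∃ f : Fin n → Set V, (∀ i, IsIsoPathSet G (f i)) ∧ (⋃ i, f i) = Set.univ ∧
    Pairwise (Function.onFun Disjoint f)}

/-! An isometric path of `P_r □ C_s` has at most `diam + 1 = r + ⌊s/2⌋` vertices, so fewer than
`s` of them cover at most `(s - 1)(r + ⌊s/2⌋) < rs` vertices once `r ≥ ⌊s/2⌋ s`. Conversely the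
`s` columns `P_r × {j}` are isometric paths partitioning the vertex set. -/

namespace SimpleGraph

variable {V W : Type*} {G : SimpleGraph V} {H : SimpleGraph W}

lemma dist_boxProd_mk_right (u v : V) (b : W) : (G □ H).dist (u, b) (v, b) = G.dist u v := by
  simp [dist, edist_boxProd]

lemma dist_boxProd (hG : G.Preconnected) (hH : H.Preconnected) (x y : V × W) :
    (G □ H).dist x y = G.dist x.1 y.1 + H.dist x.2 y.2 := by
  rw [dist, edist_boxProd, ENat.toNat_add (edist_ne_top_iff_reachable.mpr (hG _ _))
    (edist_ne_top_iff_reachable.mpr (hH _ _))]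
  rfl

lemma pathGraph_dist_le {n : ℕ} {u v : Fin n} (h : u ≤ v) :
    (pathGraph n).dist u v ≤ v.val - u.val := by
  obtain ⟨d, hd⟩ : ∃ d, v.val = u.val + d := ⟨v.val - u.val, by rw [Fin.le_def] at h; omega⟩
  induction d generalizing v with
  | zero => simp [Fin.ext hd]
  | succ d ih =>
    obtain ⟨w, hw⟩ : ∃ w : Fin n, w.val = u.val + d := ⟨⟨u.val + d, by omega⟩, rfl⟩
    have hwv : (pathGraph n).Adj w v := by rw [pathGraph_adj]; omega
    have huw := ih (v := w) (by rw [Fin.le_def]; omega) hw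
    calc (pathGraph n).dist u v ≤ (pathGraph n).dist u w + (pathGraph n).dist w v :=
          hwv.reachable.dist_triangle_right u
      _ ≤ v.val - u.val := by rw [dist_eq_one_iff_adj.mpr hwv]; omega

lemma cycleGraph_dist_le (m : ℕ) (u v : Fin (m + 2)) :
    (cycleGraph (m + 2)).dist u v ≤ (m + 2) / 2 := by
  wlog huv : u ≤ v generalizing u v
  · rw [dist_comm]; exact this v u (le_of_not_ge huv)
  have le_path {a b : Fin (m + 2)} (hab : a ≤ b) : (cycleGraph (m + 2)).dist a b ≤ b.val - a.val :=
    ((pathGraph_preconnected _ a b).dist_anti pathGraph_le_cycleGraph).trans (pathGraph_dist_le hab)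
  have hwrap : (cycleGraph (m + 2)).dist 0 (Fin.last (m + 1)) = 1 :=
    dist_eq_one_iff_adj.mpr (by rw [cycleGraph_adj]; left; simp)
  have hconn := cycleGraph_connected (n := m + 1)
  have around : (cycleGraph (m + 2)).dist u v ≤ u.val + 1 + (m + 1 - v.val) :=
    calc (cycleGraph (m + 2)).dist u v
        ≤ (cycleGraph (m + 2)).dist u 0 + ((cycleGraph (m + 2)).dist 0 (Fin.last (m + 1)) +
          (cycleGraph (m + 2)).dist (Fin.last (m + 1)) v) :=
          hconn.dist_triangle.trans (Nat.add_le_add_left hconn.dist_triangle _)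
      _ ≤ u.val + 1 + (m + 1 - v.val) := by
          have hu := dist_comm (G := cycleGraph (m + 2)) ▸ le_path (Fin.zero_le u)
          have hv := dist_comm (G := cycleGraph (m + 2)) ▸ le_path (Fin.le_last v)
          rw [Fin.val_zero, Nat.sub_zero] at hu
          rw [Fin.val_last] at hv
          omega
  have := le_path huv
  omega

lemma Reachable.dist_lt_card [Fintype V] {u v : V} (h : G.Reachable u v) :
    G.dist u v < Fintype.card V := by
  obtain ⟨p, hp, hlen⟩ := h.exists_path_of_dist
  exact hlen ▸ hp.length_lt

lemma Walk.length_boxProdLeft {u v : V} (b : W) (p : G.Walk u v) :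
    (p.boxProdLeft H b).length = p.length :=
  Walk.length_map _ p

lemma Walk.support_boxProdLeft {u v : V} (b : W) (p : G.Walk u v) :
    (p.boxProdLeft H b).support = p.support.map (·, b) :=
  Walk.support_map _ p

lemma Walk.mem_support_of_pathGraph {n : ℕ} {u v k : Fin n} (p : (pathGraph n).Walk u v)
    (huk : u ≤ k) (hkv : k ≤ v) : k ∈ p.support := by
  induction p with
  | nil => simp [le_antisymm huk hkv]
  | @cons a b c hab p ih =>
    rw [Walk.support_cons, List.mem_cons]
    rw [pathGraph_adj] at hab
    by_cases hka : k = a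
    · exact Or.inl hka
    · refine Or.inr (ih ?_ hkv)
      rw [Fin.le_def] at huk ⊢
      have := Fin.val_ne_of_ne hka
      omega

lemma cylinder_dist_le (n m : ℕ) (x y : Fin n × Fin (m + 2)) :
    (pathGraph n □ cycleGraph (m + 2)).dist x y ≤ (n - 1) + (m + 2) / 2 := by
  have hpath := (pathGraph_preconnected n x.1 y.1).dist_lt_card
  have hcycle := cycleGraph_dist_le m x.2 y.2
  rw [dist_boxProd (pathGraph_preconnected n) cycleGraph_preconnected]
  rw [Fintype.card_fin] at hpath
  omega

end SimpleGraph

section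

variable {V W : Type*} {G : SimpleGraph V} {H : SimpleGraph W}

lemma isIsoPathSet_univ_pathGraph (n : ℕ) : IsIsoPathSet (pathGraph (n + 1)) Set.univ := by
  obtain ⟨p, hp, hlen⟩ := (pathGraph_connected n).exists_path_of_dist 0 (Fin.last n)
  refine ⟨_, _, p, hp, hlen, ?_⟩
  ext k
  simpa using p.mem_support_of_pathGraph (Fin.zero_le k) (Fin.le_last k)

lemma IsIsoPathSet.image_boxProdLeft {S : Set V} (b : W) (hS : IsIsoPathSet G S) :
    IsIsoPathSet (G □ H) ((·, b) '' S) := by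
  obtain ⟨u, v, p, hp, hlen, rfl⟩ := hS
  refine ⟨(u, b), (v, b), p.boxProdLeft H b, hp.map (G.boxProdLeft H b).injective, ?_, ?_⟩
  · rw [Walk.length_boxProdLeft, dist_boxProd_mk_right, hlen]
  · ext x
    simp [Walk.support_boxProdLeft]

lemma IsIsoPathSet.ncard_le {S : Set V} {D : ℕ} (hS : IsIsoPathSet G S)
    (hD : ∀ u v, G.dist u v ≤ D) : S.ncard ≤ D + 1 := by
  classical
  obtain ⟨u, v, p, -, hlen, rfl⟩ := hS
  calc {x | x ∈ p.support}.ncard = p.support.toFinset.card := by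
        rw [← Set.ncard_coe_finset]; simp
    _ ≤ p.support.length := List.toFinset_card_le _
    _ ≤ D + 1 := by rw [Walk.length_support, hlen]; exact Nat.add_le_add_right (hD u v) 1

lemma card_le_mul_of_isIsoPathSet_cover {n D : ℕ} {f : Fin n → Set V}
    (hf : ∀ i, IsIsoPathSet G (f i)) (hcov : ⋃ i, f i = Set.univ)
    (hD : ∀ u v, G.dist u v ≤ D) : Nat.card V ≤ n * (D + 1) :=
  calc Nat.card V = (⋃ i, f i).ncard := by rw [hcov, Set.ncard_univ]
    _ ≤ ∑ i, (f i).ncard := Set.ncard_iUnion_le_of_fintype f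
    _ ≤ ∑ _i : Fin n, (D + 1) := Finset.sum_le_sum fun i _ => (hf i).ncard_le hD
    _ = n * (D + 1) := by simp

lemma ipCover_eq_and_ipPartition_eq_of_partition {n : ℕ} (f : Fin n → Set V)
    (hf : ∀ i, IsIsoPathSet G (f i)) (hcov : ⋃ i, f i = Set.univ)
    (hdisj : Pairwise (Function.onFun Disjoint f))
    (hmin : ∀ (m : ℕ) (g : Fin m → Set V), (∀ i, IsIsoPathSet G (g i)) → ⋃ i, g i = Set.univ →
      n ≤ m) :
    ipCover G = n ∧ ipPartition G = n :=
  ⟨le_antisymm (Nat.sInf_le ⟨f, hf, hcov⟩)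
      (le_csInf ⟨n, f, hf, hcov⟩ fun m ⟨g, hg, hgcov⟩ => hmin m g hg hgcov),
    le_antisymm (Nat.sInf_le ⟨f, hf, hcov, hdisj⟩)
      (le_csInf ⟨n, f, hf, hcov, hdisj⟩ fun m ⟨g, hg, hgcov, _⟩ => hmin m g hg hgcov)⟩

lemma isIsoPathSet_boxProd_column (n : ℕ) (b : W) :
    IsIsoPathSet (pathGraph (n + 1) □ H) {x | x.2 = b} := by
  convert (isIsoPathSet_univ_pathGraph n).image_boxProdLeft (H := H) b using 1
  ext x
  simp [Prod.ext_iff, eq_comm]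

end

theorem stmt_12 (r s : ℕ) (hs : 3 ≤ s) (h : s / 2 * s ≤ r) :
    ipCover (pathGraph r □ cycleGraph s) = s ∧
      ipPartition (pathGraph r □ cycleGraph s) = s := by
  obtain ⟨m, rfl⟩ : ∃ m, s = m + 2 := ⟨s - 2, by omega⟩
  have hhalf : 1 ≤ (m + 2) / 2 := by omega
  obtain ⟨k, rfl⟩ : ∃ k, r = k + 1 := ⟨r - 1, by have := Nat.mul_le_mul_right (m + 2) hhalf; omega⟩
  refine ipCover_eq_and_ipPartition_eq_of_partition (fun j => {x | x.2 = j})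
    (isIsoPathSet_boxProd_column k) ?_ ?_ fun n g hg hgcov => ?_
  · ext x
    simp
  · intro i j hij
    exact Set.disjoint_left.mpr fun x hi hj => hij (hi.symm.trans hj)
  · have hcount := card_le_mul_of_isIsoPathSet_cover hg hgcov (cylinder_dist_le (k + 1) m)
    simp only [Nat.card_eq_fintype_card, Fintype.card_prod, Fintype.card_fin,
      Nat.add_sub_cancel] at hcount
    by_contra! hn
    nlinarith [Nat.mul_le_mul_right (k + (m + 2) / 2 + 1) (Nat.le_of_lt_succ hn)]
end

section
/- For the r-dimensional Benes network BN(r), both the isometric path cover number and the isometric path partition number equal 2^r. -/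
/-!
An isometric path in a graph of diameter `D` has at most `D + 1` vertices, so covering `V` takes at
least `|V| / (D + 1)` of them. In `BN(r)` the `2 ^ r` rows `{w} × [0, 2r]` partition the
`(2r + 1) 2 ^ r` vertices, and each row is an isometric path because every edge changes the level
by exactly one. It remains to see that the diameter is at most `2r`: climbing from level `0` to `r`,
or from `r` to `2r`, passes the switch of every bit once, so one can reach any word there, and two
vertices are joined through level `0` or level `2r` by going straight along their rows.
-/

open SimpleGraph

/-- The `r`-dimensional Benes network: vertices `⟨w, i⟩` with `w ∈ {0,1}^r` and
`0 ≤ i ≤ 2r`; `⟨w, i⟩` is adjacent to `⟨w', i+1⟩` iff `w = w'` or `w` and `w'` differ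
exactly in the bit at position `i` (when `i < r`), respectively `2r - 1 - i` (when `i ≥ r`). -/
def benes (r : ℕ) : SimpleGraph ((Fin r → Bool) × Fin (2 * r + 1)) :=
  SimpleGraph.fromRel (fun a b =>
    (a.2 : ℕ) + 1 = (b.2 : ℕ) ∧
      (a.1 = b.1 ∨ ∀ j : Fin r, b.1 j =
        if (j : ℕ) = (if (a.2 : ℕ) < r then (a.2 : ℕ) else 2 * r - 1 - (a.2 : ℕ))
        then !(a.1 j) else a.1 j))

section IsometricPaths

variable {V : Type*} {G : SimpleGraph V}

lemma dist_le_of_ediam_le {D : ℕ} (hD : G.ediam ≤ D) (u v : V) : G.dist u v ≤ D :=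
  ENat.toNat_le_of_le_natCast (edist_le_ediam.trans hD)

lemma IsIsoPathSet.ncard_le_s16 {D : ℕ} (hD : G.ediam ≤ D) {s : Set V} (hs : IsIsoPathSet G s) :
    s.ncard ≤ D + 1 := by
  classical
  obtain ⟨u, v, p, -, hlen, rfl⟩ := hs
  calc {x | x ∈ p.support}.ncard = p.support.toFinset.card := by
        rw [← Set.ncard_coe_finset, List.coe_toFinset]
    _ ≤ p.support.length := p.support.toFinset_card_le
    _ = G.dist u v + 1 := by rw [p.length_support, hlen]
    _ ≤ D + 1 := Nat.succ_le_succ (dist_le_of_ediam_le hD u v)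

lemma card_le_mul_of_iUnion_isIsoPathSet [Fintype V] {D n : ℕ} (hD : G.ediam ≤ D)
    {f : Fin n → Set V} (hf : ∀ i, IsIsoPathSet G (f i)) (hU : ⋃ i, f i = Set.univ) :
    Fintype.card V ≤ n * (D + 1) :=
  calc Fintype.card V = (⋃ i, f i).ncard := by
        rw [hU, Set.ncard_univ, Nat.card_eq_fintype_card]
    _ ≤ ∑ i, (f i).ncard := Set.ncard_iUnion_le_of_fintype f
    _ ≤ ∑ _i : Fin n, (D + 1) := Finset.sum_le_sum fun i _ => (hf i).ncard_le_s16 hD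
    _ = n * (D + 1) := by simp

theorem ipCover_eq_and_ipPartition_eq_of_card_eq [Fintype V] {ι : Type*} [Fintype ι] {D : ℕ}
    (hD : G.ediam ≤ D) (f : ι → Set V) (hf : ∀ i, IsIsoPathSet G (f i))
    (hU : ⋃ i, f i = Set.univ) (hdisj : Pairwise (Function.onFun Disjoint f))
    (hcard : Fintype.card V = Fintype.card ι * (D + 1)) :
    ipCover G = Fintype.card ι ∧ ipPartition G = Fintype.card ι := by
  set e := (Fintype.equivFin ι).symm
  have hf' : ∀ i, IsIsoPathSet G ((f ∘ e) i) := fun i => hf (e i)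
  have hU' : ⋃ i, (f ∘ e) i = Set.univ := by rw [← hU]; exact e.surjective.iUnion_comp f
  have hdisj' : Pairwise (Function.onFun Disjoint (f ∘ e)) := hdisj.comp_of_injective e.injective
  have hmin : ∀ n (g : Fin n → Set V), (∀ i, IsIsoPathSet G (g i)) → ⋃ i, g i = Set.univ →
      Fintype.card ι ≤ n := fun n g hg hgU =>
    Nat.le_of_mul_le_mul_right (hcard ▸ card_le_mul_of_iUnion_isIsoPathSet hD hg hgU)
      D.succ_pos
  constructor
  · exact le_antisymm (Nat.sInf_le ⟨f ∘ e, hf', hU'⟩)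
      (le_csInf ⟨_, f ∘ e, hf', hU'⟩ fun n ⟨g, hg, hgU⟩ => hmin n g hg hgU)
  · exact le_antisymm (Nat.sInf_le ⟨f ∘ e, hf', hU', hdisj'⟩)
      (le_csInf ⟨_, f ∘ e, hf', hU', hdisj'⟩ fun n ⟨g, hg, hgU, _⟩ => hmin n g hg hgU)

end IsometricPaths

namespace Benes

/-- The bit flipped by the cross edges between levels `t` and `t + 1` of `benes r`. -/
def switchBit (r t : ℕ) : ℕ := if t < r then t else 2 * r - 1 - t

variable {r : ℕ}

lemma adj_of_eq_off_switchBit {x y : (Fin r → Bool) × Fin (2 * r + 1)}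
    (hlevel : (x.2 : ℕ) + 1 = y.2) (h : ∀ j : Fin r, (j : ℕ) ≠ switchBit r x.2 → x.1 j = y.1 j) :
    (benes r).Adj x y := by
  refine (fromRel_adj _ _ _).2 ⟨fun hxy => by simp [hxy] at hlevel, Or.inl ⟨hlevel, ?_⟩⟩
  by_cases hflip : ∀ j : Fin r, (j : ℕ) = switchBit r x.2 → y.1 j = !x.1 j
  · right
    change ∀ j : Fin r, y.1 j = if (j : ℕ) = switchBit r x.2 then !x.1 j else x.1 j
    intro j
    split_ifs with hj
    exacts [hflip j hj, (h j hj).symm]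
  · left
    push Not at hflip
    obtain ⟨j₀, hj₀, hne⟩ := hflip
    funext j
    by_cases hj : (j : ℕ) = switchBit r x.2
    · obtain rfl : j = j₀ := Fin.ext (hj.trans hj₀.symm)
      revert hne
      cases x.1 j <;> cases y.1 j <;> decide
    · exact h j hj

lemma level_le_of_adj {x y : (Fin r → Bool) × Fin (2 * r + 1)} (h : (benes r).Adj x y) :
    (y.2 : ℕ) ≤ x.2 + 1 := by
  rcases (fromRel_adj _ _ _).1 h with ⟨-, ⟨h, -⟩ | ⟨h, -⟩⟩ <;> omega

lemma level_le_length {x y : (Fin r → Bool) × Fin (2 * r + 1)} (p : (benes r).Walk x y) :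
    (y.2 : ℕ) ≤ x.2 + p.length := by
  induction p with
  | nil => simp
  | cons h _ ih =>
    have := level_le_of_adj h
    rw [Walk.length_cons]
    omega

lemma edist_le_of_eq_off_switchBit (x y : (Fin r → Bool) × Fin (2 * r + 1))
    (hxy : (x.2 : ℕ) ≤ y.2)
    (h : ∀ j : Fin r, (∀ t, (x.2 : ℕ) ≤ t → t < y.2 → (j : ℕ) ≠ switchBit r t) → x.1 j = y.1 j) :
    (benes r).edist x y ≤ ((y.2 : ℕ) - x.2 : ℕ) := by
  obtain ⟨k, hk⟩ : ∃ k, (y.2 : ℕ) = x.2 + k := ⟨_, (Nat.add_sub_cancel' hxy).symm⟩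
  induction k generalizing y with
  | zero =>
    obtain rfl : x = y :=
      Prod.ext (funext fun j => h j fun t h₁ h₂ => by omega) (Fin.ext (by omega))
    simp
  | succ k ih =>
    let z : (Fin r → Bool) × Fin (2 * r + 1) :=
      (fun j => if (j : ℕ) = switchBit r (x.2 + k) then x.1 j else y.1 j, ⟨x.2 + k, by omega⟩)
    have hxz : (benes r).edist x z ≤ k := by
      refine (ih z (by simp [z]) (fun j hj => ?_) (by simp [z])).trans (by simp [z])
      by_cases hjk : (j : ℕ) = switchBit r (x.2 + k)
      · simp [z, hjk]
      · simp only [z, hjk, if_false]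
        exact h j fun t h₁ h₂ =>
          if htk : t = x.2 + k then htk ▸ hjk else hj t h₁ (by simp [z]; omega)
    have hzy : (benes r).Adj z y :=
      adj_of_eq_off_switchBit (by simp [z]; omega) fun j hj => by simp [z, hj]
    calc (benes r).edist x y ≤ (benes r).edist x z + (benes r).edist z y :=
          SimpleGraph.edist_triangle
      _ ≤ k + 1 := add_le_add hxz (edist_le_one_iff_adj_or_eq.2 (Or.inl hzy))
      _ = ((y.2 : ℕ) - x.2 : ℕ) := by rw [hk]; simp

lemma edist_le_natDist (w : Fin r → Bool) (i j : Fin (2 * r + 1)) :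
    (benes r).edist (w, i) (w, j) ≤ Nat.dist i j := by
  rcases le_total (i : ℕ) j with hij | hji
  · exact (edist_le_of_eq_off_switchBit (w, i) (w, j) hij fun _ _ => rfl).trans
      (by dsimp only; unfold Nat.dist; norm_cast; omega)
  · rw [SimpleGraph.edist_comm]
    exact (edist_le_of_eq_off_switchBit (w, j) (w, i) hji fun _ _ => rfl).trans
      (by dsimp only; unfold Nat.dist; norm_cast; omega)

def middle (r : ℕ) : Fin (2 * r + 1) := ⟨r, by omega⟩

lemma edist_zero_middle_le (w w' : Fin r → Bool) :
    (benes r).edist (w, 0) (w', middle r) ≤ r := by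
  refine (edist_le_of_eq_off_switchBit (w, 0) (w', middle r) (by simp [middle])
    fun j hj => absurd (hj j (by simp) (by simp [middle])) ?_).trans (by simp [middle])
  simp [switchBit]

lemma edist_middle_last_le (w w' : Fin r → Bool) :
    (benes r).edist (w, middle r) (w', Fin.last _) ≤ r := by
  refine (edist_le_of_eq_off_switchBit (w, middle r) (w', Fin.last _) (by simp [middle]; omega)
    fun j hj => absurd (hj (2 * r - 1 - j) (by simp [middle]; omega) (by simp; omega)) ?_).trans
    (by simp [middle]; norm_cast; omega)
  unfold switchBit
  split_ifs <;> omega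

lemma ediam_le : (benes r).ediam ≤ 2 * r := by
  refine ediam_le_of_edist_le fun x y => ?_
  wlog hxy : (x.2 : ℕ) ≤ y.2 generalizing x y
  · rw [SimpleGraph.edist_comm]
    exact this y x (by omega)
  obtain ⟨w, i⟩ := x
  obtain ⟨w', i'⟩ := y
  dsimp only at hxy
  have route : ∀ a b, (benes r).edist (w, i) (w', i') ≤
      (benes r).edist (w, i) a + (benes r).edist a b + (benes r).edist b (w', i') :=
    fun a b => (SimpleGraph.edist_triangle (v := b)).trans
      (by gcongr; exact SimpleGraph.edist_triangle)
  by_cases hsum : (i : ℕ) + i' ≤ 2 * r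
  · calc (benes r).edist (w, i) (w', i') ≤ _ := route (w, 0) (w', middle r)
      _ ≤ Nat.dist i 0 + r + Nat.dist (middle r) i' := by
        gcongr
        exacts [edist_le_natDist w i 0, edist_zero_middle_le w w', edist_le_natDist w' _ i']
      _ ≤ 2 * r := by norm_cast; simp only [Nat.dist, middle]; omega
  · calc (benes r).edist (w, i) (w', i') ≤ _ := route (w, middle r) (w', Fin.last _)
      _ ≤ Nat.dist i (middle r) + r + Nat.dist (Fin.last _) i' := by
        gcongr
        exacts [edist_le_natDist w i _, edist_middle_last_le w w', edist_le_natDist w' _ i']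
      _ ≤ 2 * r := by norm_cast; simp only [Nat.dist, middle]; omega

def rowWalk (w : Fin r → Bool) : (k : ℕ) → (hk : k ≤ 2 * r) →
    (benes r).Walk (w, ⟨0, by omega⟩) (w, ⟨k, by omega⟩)
  | 0, _ => Walk.nil
  | k + 1, hk => (rowWalk w k (by omega)).concat (adj_of_eq_off_switchBit rfl fun _ _ => rfl)

lemma length_rowWalk (w : Fin r → Bool) (k : ℕ) (hk : k ≤ 2 * r) :
    (rowWalk w k hk).length = k := by
  induction k with
  | zero => rfl
  | succ k ih => rw [rowWalk, Walk.length_concat, ih]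

lemma mem_support_rowWalk (w : Fin r → Bool) (k : ℕ) (hk : k ≤ 2 * r)
    (x : (Fin r → Bool) × Fin (2 * r + 1)) :
    x ∈ (rowWalk w k hk).support ↔ x.1 = w ∧ (x.2 : ℕ) ≤ k := by
  induction k with
  | zero =>
    rw [rowWalk, Walk.support_nil, List.mem_singleton, Prod.ext_iff, Fin.ext_iff, Nat.le_zero]
  | succ k ih =>
    rw [rowWalk, Walk.support_concat, List.mem_append, List.mem_singleton, ih, Prod.ext_iff,
      Fin.ext_iff, ← and_or_left]
    exact and_congr_right fun _ => by dsimp only; omega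

lemma isIsoPathSet_row (w : Fin r → Bool) : IsIsoPathSet (benes r) (Prod.fst ⁻¹' {w}) := by
  let p := rowWalk w (2 * r) le_rfl
  have hdist : (benes r).dist (w, ⟨0, by omega⟩) (w, ⟨2 * r, by omega⟩) = p.length := by
    refine le_antisymm (dist_le p) ?_
    obtain ⟨q, hq⟩ := Reachable.exists_walk_length_eq_dist ⟨p⟩
    calc p.length = 2 * r := length_rowWalk w _ _
      _ ≤ q.length := by simpa using level_le_length q
      _ = _ := hq
  refine ⟨_, _, p, p.isPath_of_length_eq_dist hdist.symm, hdist.symm, ?_⟩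
  ext x
  simp only [Set.mem_preimage, Set.mem_singleton_iff, Set.mem_ofPred_eq, p, mem_support_rowWalk,
    Nat.lt_succ_iff.mp x.2.isLt, and_true]

end Benes

theorem stmt_16_general (r : ℕ) :
    ipCover (benes r) = 2 ^ r ∧ ipPartition (benes r) = 2 ^ r := by
  have hdisj : Pairwise (Function.onFun Disjoint fun w : Fin r → Bool =>
      (Prod.fst ⁻¹' {w} : Set ((Fin r → Bool) × Fin (2 * r + 1)))) :=
    fun w w' hne => Set.disjoint_singleton.2 hne |>.preimage _
  simpa using ipCover_eq_and_ipPartition_eq_of_card_eq Benes.ediam_le _ Benes.isIsoPathSet_row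
    (Set.iUnion_eq_univ_iff.2 fun x => ⟨x.1, rfl⟩) hdisj (by simp [Fintype.card_prod])

theorem stmt_16 (r : ℕ) (hr : 1 ≤ r) :
    ipCover (benes r) = 2 ^ r ∧ ipPartition (benes r) = 2 ^ r :=
  stmt_16_general r
end
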